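/- For a positive definite matrix A, the second derivative of Φ₃(A,X) = tr(A+X) − 2 tr(A # X) with respect to X, evaluated at X = A, satisfies D²Φ₃(A,X)|_{X=A}(Y,Y) = (1/2) tr(Y A^{-1} Y) for every Hermitian Y; in particular it is nonnegative, and positive when Y ≠ 0. -/

import Mathlib

open scoped ComplexOrder
open MeasureTheory

/-- The positive semidefinite square root of a matrix (zero if not positive semidefinite). -/
noncomputable def msqrt {N : ℕ} (A : Matrix (Fin N) (Fin N) ℂ) : Matrix (Fin N) (Fin N) ℂ :=
  by classical exact if h : A.PosSemidef then
    ((h.1.eigenvectorUnitary : Matrix (Fin N) (Fin N) ℂ) *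
      Matrix.diagonal ((RCLike.ofReal : ℝ → ℂ) ∘ Real.sqrt ∘ h.1.eigenvalues) *
      (star (h.1.eigenvectorUnitary : Matrix (Fin N) (Fin N) ℂ))) else 0

/-- The Pusz–Woronowicz geometric mean `A # B = A^{1/2} (A^{-1/2} B A^{-1/2})^{1/2} A^{1/2}`. -/
noncomputable def geom {N : ℕ} (A B : Matrix (Fin N) (Fin N) ℂ) : Matrix (Fin N) (Fin N) ℂ :=
  msqrt A * msqrt ((msqrt A)⁻¹ * B * (msqrt A)⁻¹) * msqrt A

/-- The logarithm of a Hermitian matrix, via the spectral theorem (zero if not Hermitian). -/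
noncomputable def mlog {N : ℕ} (A : Matrix (Fin N) (Fin N) ℂ) : Matrix (Fin N) (Fin N) ℂ :=
  by classical exact if h : A.IsHermitian then h.cfc Real.log else 0

/-- The log Euclidean mean `exp((log A + log B)/2)`. -/
noncomputable def logEuclid {N : ℕ} (A B : Matrix (Fin N) (Fin N) ℂ) : Matrix (Fin N) (Fin N) ℂ :=
  NormedSpace.exp ((2:ℂ)⁻¹ • (mlog A + mlog B))

/-!
Write `S = A^{1/2}` and `M = S⁻¹ Y S⁻¹ = U diag(μ) U*`. Then `A + tY = S (1 + tM) S`, so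
`A # (A + tY) = S (1 + tM)^{1/2} S`, and for small `t` its trace is `∑ cᵢ √(1 + t μᵢ)` with
`cᵢ = (U* A U)ᵢᵢ`. Differentiating twice at `0` gives `½ ∑ cᵢ μᵢ² = ½ tr (S M² S) = ½ tr (Y A⁻¹ Y)`.
Positivity: `Y A⁻¹ Y = Yᴴ Bᴴ B Y` for an invertible `B`, whose trace is the squared Frobenius norm
of `B Y`.
-/

open Filter Matrix Topology
open scoped MatrixOrder

lemma iteratedDeriv_two_eq_of_hasDerivAt {𝕜 F : Type*} [NontriviallyNormedField 𝕜]
    [NormedAddCommGroup F] [NormedSpace 𝕜 F] {f f' : 𝕜 → F} {x : 𝕜} {f'' : F}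
    (hf : ∀ᶠ t in 𝓝 x, HasDerivAt f (f' t) t) (hf' : HasDerivAt f' f'' x) :
    iteratedDeriv 2 f x = f'' := by
  have hderiv : deriv f =ᶠ[𝓝 x] f' := hf.mono fun t ht => ht.deriv
  rw [iteratedDeriv_succ, iteratedDeriv_one, hderiv.deriv_eq, hf'.deriv]

lemma eventually_forall_one_add_mul_pos {ι : Type*} [Finite ι] (μ : ι → ℝ) :
    ∀ᶠ t in 𝓝 (0 : ℝ), ∀ i, 0 < 1 + t * μ i :=
  eventually_all.2 fun _ =>
    (Continuous.tendsto (by fun_prop) 0).eventually (lt_mem_nhds (by simp))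

lemma hasDerivAt_sqrt_one_add_mul {μ t : ℝ} (h : 0 < 1 + t * μ) :
    HasDerivAt (fun s => √(1 + s * μ)) (μ / (2 * √(1 + t * μ))) t := by
  have hlin : HasDerivAt (fun s => 1 + s * μ) μ t := by
    simpa using ((hasDerivAt_id t).mul_const μ).const_add 1
  exact ((Real.hasDerivAt_sqrt h.ne').comp t hlin).congr_deriv (by ring)

lemma hasDerivAt_div_sqrt_one_add_mul (μ : ℝ) :
    HasDerivAt (fun s => μ / (2 * √(1 + s * μ))) (-μ ^ 2 / 4) 0 := by
  have h := (hasDerivAt_const (0 : ℝ) μ).div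
    ((hasDerivAt_sqrt_one_add_mul (μ := μ) (t := 0) (by simp)).const_mul 2) (by simp)
  exact h.congr_deriv (by simp only [zero_mul, add_zero, Real.sqrt_one, mul_one, zero_sub]; ring)

lemma iteratedDeriv_two_sub_sum_sqrt_one_add_mul {ι : Type*} [Fintype ι] (a b : ℂ) (c : ι → ℂ)
    (μ : ι → ℝ) :
    iteratedDeriv 2 (fun t : ℝ => a + t * b - 2 * ∑ i, c i * √(1 + t * μ i)) 0
      = 2⁻¹ * ∑ i, c i * μ i ^ 2 := by
  refine iteratedDeriv_two_eq_of_hasDerivAt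
    (f' := fun t => b - 2 * ∑ i, c i * ↑(μ i / (2 * √(1 + t * μ i))))
    ((eventually_forall_one_add_mul_pos μ).mono fun t ht => ?_) ?_
  · have hlin : HasDerivAt (fun s : ℝ => a + s * b) b t := by
      simpa using ((hasDerivAt_id t).ofReal_comp.mul_const b).const_add a
    exact hlin.sub <| (HasDerivAt.fun_sum fun i _ =>
      ((hasDerivAt_sqrt_one_add_mul (ht i)).ofReal_comp).const_mul (c i)).const_mul 2
  · have h := (hasDerivAt_const (0 : ℝ) b).sub <|
      (HasDerivAt.fun_sum (u := Finset.univ) fun i _ =>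
        ((hasDerivAt_div_sqrt_one_add_mul (μ i)).ofReal_comp).const_mul (c i)).const_mul 2
    refine h.congr_deriv ?_
    simp only [Finset.mul_sum, ← Finset.sum_neg_distrib, zero_sub]
    refine Finset.sum_congr rfl fun i _ => ?_
    push_cast
    ring

namespace Matrix

variable {n : Type*} [Fintype n] [DecidableEq n]

lemma trace_mul_diagonal {R : Type*} [NonUnitalNonAssocSemiring R] (B : Matrix n n R)
    (d : n → R) :
    (B * diagonal d).trace = ∑ i, B i i * d i := by
  simp [trace, mul_diagonal]

variable {𝕜 : Type*} [RCLike 𝕜]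

lemma IsHermitian.trace_mul_cfc {M : Matrix n n 𝕜} (hM : M.IsHermitian) (B : Matrix n n 𝕜)
    (f : ℝ → ℝ) :
    (B * cfc f M).trace = ∑ i, (star (hM.eigenvectorUnitary : Matrix n n 𝕜) * B *
      hM.eigenvectorUnitary) i i * f (hM.eigenvalues i) := by
  rw [hM.cfc_eq, IsHermitian.cfc, Unitary.conjStarAlgAut_apply, ← Matrix.mul_assoc,
    ← Matrix.mul_assoc, trace_mul_cycle, ← Matrix.mul_assoc, trace_mul_diagonal]
  rfl

lemma IsHermitian.cfcSqrt_one_add_smul {M : Matrix n n 𝕜} (hM : M.IsHermitian) {t : ℝ}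
    (ht : ∀ i, 0 ≤ 1 + t * hM.eigenvalues i) :
    0 ≤ 1 + t • M ∧ CFC.sqrt (1 + t • M) = cfc (fun x => √(1 + t * x)) M := by
  have hspec : ∀ x ∈ spectrum ℝ M, 0 ≤ 1 + t * x := by
    rw [hM.spectrum_real_eq_range_eigenvalues]
    rintro _ ⟨i, rfl⟩
    exact ht i
  have hlin : 1 + t • M = cfc (fun x => 1 + t * x) M := by
    rw [cfc_const_add 1 (t * ·) M, cfc_const_mul_id t M, Algebra.algebraMap_eq_smul_one, one_smul]
  refine ⟨hlin ▸ cfc_nonneg hspec, CFC.sqrt_unique ?_ (cfc_nonneg fun x _ => Real.sqrt_nonneg _)⟩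
  rw [hlin, ← cfc_mul (fun x => √(1 + t * x)) (fun x => √(1 + t * x)) M]
  exact cfc_congr fun x hx => Real.mul_self_sqrt (hspec x hx)

lemma PosDef.isUnit_det_sqrt {A : Matrix n n 𝕜} (hA : A.PosDef) : IsUnit (CFC.sqrt A).det :=
  (isUnit_iff_isUnit_det _).mp <| isUnit_of_mul_isUnit_left <|
    (CFC.sqrt_mul_sqrt_self A hA.posSemidef.nonneg).symm ▸ hA.isUnit

open scoped Matrix.Norms.L2Operator in
lemma PosDef.trace_conjTranspose_mul_mul_pos {m : Type*} [Fintype m] {A : Matrix n n 𝕜}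
    (hA : A.PosDef) {Y : Matrix n m 𝕜} (hY : Y ≠ 0) : 0 < (Yᴴ * A * Y).trace := by
  obtain ⟨B, hB, rfl⟩ :=
    CStarAlgebra.isStrictlyPositive_iff_eq_star_mul_self.mp hA.isStrictlyPositive
  have hBY : Yᴴ * (star B * B) * Y = (B * Y)ᴴ * (B * Y) := by
    simp [conjTranspose_mul, Matrix.mul_assoc, star_eq_conjTranspose]
  rw [hBY]
  refine (posSemidef_conjTranspose_mul_self _).trace_nonneg.lt_of_ne' fun h => hY ?_
  rw [trace_conjTranspose_mul_self_eq_zero_iff] at h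
  lift B to (Matrix n n 𝕜)ˣ using hB
  simpa [← Matrix.mul_assoc] using congr(((B⁻¹ : (Matrix n n 𝕜)ˣ) : Matrix n n 𝕜) * $h)

end Matrix

lemma msqrt_eq_cfcSqrt {N : ℕ} {A : Matrix (Fin N) (Fin N) ℂ} (hA : A.PosSemidef) :
    msqrt A = CFC.sqrt A := by
  rw [msqrt, dif_pos hA, CFC.sqrt_eq_cfc, cfc_nnreal_eq_real _ A, hA.1.cfc_eq]
  simp only [IsHermitian.cfc, Unitary.conjStarAlgAut_apply]
  congr 3
  funext i
  simp [Real.coe_sqrt, Real.coe_toNNReal', hA.eigenvalues_nonneg i]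

lemma geom_add_smul_eq {N : ℕ} {A : Matrix (Fin N) (Fin N) ℂ} (hA : A.PosDef)
    (Y : Matrix (Fin N) (Fin N) ℂ) (t : ℝ) :
    geom A (A + t • Y) = CFC.sqrt A *
      msqrt (1 + t • ((CFC.sqrt A)⁻¹ * Y * (CFC.sqrt A)⁻¹)) * CFC.sqrt A := by
  set S := CFC.sqrt A
  have hSS : S * S = A := CFC.sqrt_mul_sqrt_self A hA.posSemidef.nonneg
  have hS : IsUnit S.det := hA.isUnit_det_sqrt
  have hSAS : S⁻¹ * A * S⁻¹ = 1 := by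
    rw [← hSS, ← Matrix.mul_assoc, nonsing_inv_mul _ hS, Matrix.one_mul, mul_nonsing_inv _ hS]
  rw [geom, msqrt_eq_cfcSqrt hA.posSemidef, Matrix.mul_add, Matrix.add_mul, hSAS,
    Matrix.mul_smul, Matrix.smul_mul]

lemma iteratedDeriv_two_trace_add_sub_two_trace_geom {N : ℕ}
    {A Y : Matrix (Fin N) (Fin N) ℂ} (hA : A.PosDef) (hY : Y.IsHermitian) :
    iteratedDeriv 2 (fun t : ℝ => (A + (A + t • Y)).trace - 2 * (geom A (A + t • Y)).trace) 0
      = (2:ℂ)⁻¹ * (Y * A⁻¹ * Y).trace := by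
  set S := CFC.sqrt A
  have hSS : S * S = A := CFC.sqrt_mul_sqrt_self A hA.posSemidef.nonneg
  have hSH : S.IsHermitian := (nonneg_iff_posSemidef.mp (CFC.sqrt_nonneg A)).isHermitian
  have hS : IsUnit S.det := hA.isUnit_det_sqrt
  set M := S⁻¹ * Y * S⁻¹
  have hM : M.IsHermitian := by
    simp only [M, IsHermitian, conjTranspose_mul, conjTranspose_nonsing_inv, hSH.eq, hY.eq,
      Matrix.mul_assoc]
  set c : Fin N → ℂ := fun i => (star (hM.eigenvectorUnitary : Matrix (Fin N) (Fin N) ℂ) * A *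
    hM.eigenvectorUnitary) i i
  set μ := hM.eigenvalues
  have htrace_geom : ∀ t : ℝ, (∀ i, 0 < 1 + t * μ i) →
      (geom A (A + t • Y)).trace = ∑ i, c i * √(1 + t * μ i) := by
    intro t ht
    obtain ⟨hpos, hsqrt⟩ := hM.cfcSqrt_one_add_smul fun i => (ht i).le
    rw [geom_add_smul_eq hA, msqrt_eq_cfcSqrt (nonneg_iff_posSemidef.mp hpos), hsqrt,
      trace_mul_cycle, hSS, hM.trace_mul_cfc]
    rfl
  have hYAY : Y * A⁻¹ * Y = S * M ^ 2 * S := by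
    rw [← hSS, Matrix.mul_inv_rev]
    simp only [M, sq, Matrix.mul_assoc, nonsing_inv_mul _ hS, mul_nonsing_inv_cancel_left _ _ hS,
      Matrix.mul_one]
  have htrace_YAY : (Y * A⁻¹ * Y).trace = ∑ i, c i * μ i ^ 2 := by
    rw [hYAY, ← cfc_pow_id (R := ℝ) M 2 hM.isSelfAdjoint, trace_mul_cycle, hSS,
      hM.trace_mul_cfc]
    push_cast
    rfl
  have hphi : (fun t : ℝ => (A + (A + t • Y)).trace - 2 * (geom A (A + t • Y)).trace)
      =ᶠ[𝓝 0] fun t : ℝ => 2 * A.trace + t * Y.trace - 2 * ∑ i, c i * √(1 + t * μ i) :=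
    (eventually_forall_one_add_mul_pos μ).mono fun t ht => by
      simp only [trace_add, trace_smul, htrace_geom t ht, Complex.real_smul]
      ring
  rw [hphi.iteratedDeriv_eq, iteratedDeriv_two_sub_sum_sqrt_one_add_mul, htrace_YAY]

/-- The second derivative of `Φ₃(A,X) = tr(A+X) - 2 tr(A # X)` in `X` at `X = A` in direction a
Hermitian `Y` is `(1/2) tr(Y A⁻¹ Y)`; it is nonnegative, and positive when `Y ≠ 0`. -/
theorem stmt11 {N : ℕ} (A : Matrix (Fin N) (Fin N) ℂ) (hA : A.PosDef)
    (Y : Matrix (Fin N) (Fin N) ℂ) (hY : Y.IsHermitian) :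
    iteratedDeriv 2
        (fun t : ℝ => (A + (A + t • Y)).trace - 2 * (geom A (A + t • Y)).trace) 0
      = (2:ℂ)⁻¹ * (Y * A⁻¹ * Y).trace ∧
    0 ≤ (2:ℂ)⁻¹ * (Y * A⁻¹ * Y).trace ∧
    (Y ≠ 0 → 0 < (2:ℂ)⁻¹ * (Y * A⁻¹ * Y).trace) := by
  have hYAY : Y * A⁻¹ * Y = Yᴴ * A⁻¹ * Y := by rw [hY.eq]
  have hhalf : (0 : ℂ) < 2⁻¹ := by norm_num
  refine ⟨iteratedDeriv_two_trace_add_sub_two_trace_geom hA hY, ?_, fun hY0 => ?_⟩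
  · exact mul_nonneg hhalf.le
      (hYAY ▸ (hA.inv.posSemidef.conjTranspose_mul_mul_same Y).trace_nonneg)
  · exact mul_pos hhalf (hYAY ▸ hA.inv.trace_conjTranspose_mul_mul_pos hY0)
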